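/- Under the assumptions p ∈ (0,1), v > 0, δ ∈ (0,1), c continuous strictly increasing with c(j) → ∞ as j → 1 and pv > c(0): no strategy that searches positive-measure sets in periods 1,...,T and then stops forever can be optimal; in particular, for any finite T and any increasing sequence 0 = l_0 < l_1 < ... < l_T < 1 satisfying the last-period optimality condition pv/((1−l_{T-1})p+(1−p)) = c(l_T), there exists l_{T+1} > l_T such that appending one more period of search strictly increases total expected discounted payoff. -/

import Mathlib

/-!
At the last-period optimum, `c (l T)` equals the marginal benefit of search computed with the
prior `l (T-1)`. Having searched more by `l T`, the posterior-weighted marginal benefit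
`p v / ((1 - l T) p + (1 - p))` is strictly larger, so `c (l T)` lies strictly below it, and by
continuity of `c` a short further search interval `[l T, l')` costs less than it earns.
-/

open Set

theorem exists_intervalIntegral_lt_mul_of_lt {f : ℝ → ℝ} {a u K : ℝ}
    (hf : ContinuousOn f (Ico a u)) (hau : a < u) (hfa : f a < K) :
    ∃ b ∈ Ioo a u, ∫ x in a..b, f x < (b - a) * K := by
  have hnhds : {x | f x < K} ∩ Ico a u ∈ nhdsWithin a (Ici a) :=
    Filter.inter_mem
      (((hf a ⟨le_rfl, hau⟩).mono_of_mem_nhdsWithin (Ico_mem_nhdsGE hau)).eventually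
        (gt_mem_nhds hfa))
      (Ico_mem_nhdsGE hau)
  obtain ⟨u', hu', hsub⟩ := (mem_nhdsGE_iff_exists_Ico_subset' hau).1 hnhds
  set b := (a + u') / 2
  have hab : a < b := by simp only [b]; linarith [mem_Ioi.1 hu']
  have hIcc : Icc a b ⊆ {x | f x < K} ∩ Ico a u := fun x hx =>
    hsub ⟨hx.1, hx.2.trans_lt (by simp only [b]; linarith [mem_Ioi.1 hu'])⟩
  have hbu : b < u := (hIcc (right_mem_Icc.2 hab.le)).2.2
  refine ⟨b, ⟨hab, hbu⟩, ?_⟩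
  calc ∫ x in a..b, f x
      < ∫ _ in a..b, K :=
        intervalIntegral.integral_lt_integral_of_continuousOn_of_le_of_exists_lt hab
          (hf.mono fun x hx => (hIcc hx).2) continuousOn_const
          (fun x hx => (hIcc (Ioc_subset_Icc_self hx)).1.le)
          ⟨a, left_mem_Icc.2 hab.le, (hIcc (left_mem_Icc.2 hab.le)).1⟩
    _ = (b - a) * K := by rw [intervalIntegral.integral_const, smul_eq_mul]

theorem never_stop_general (p v δ : ℝ) (hp : p ∈ Set.Ioo (0:ℝ) 1) (hv : 0 < v)
    (hδ : δ ∈ Set.Ioo (0:ℝ) 1)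
    (c : ℝ → ℝ)
    (hc_cont : ContinuousOn c (Set.Ico (0:ℝ) 1))
    (T : ℕ) (hT : 1 ≤ T) (l : ℕ → ℝ) (hl0 : l 0 = 0)
    (hincr : ∀ t < T, l t < l (t + 1)) (hlT : l T < 1)
    (hfoc : p * v / ((1 - l (T - 1)) * p + (1 - p)) = c (l T)) :
    ∃ lnext ∈ Set.Ioo (l T) 1,
      0 < δ ^ T * (1 - p * l T) *
        ((lnext - l T) * p * v / ((1 - l T) * p + (1 - p)) -
          ∫ j in (l T)..lnext, c j) := by
  obtain ⟨hp0, hp1⟩ := hp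
  have hlT0 : 0 ≤ l T := hl0 ▸ (strictMonoOn_Iic_of_lt_succ hincr).monotoneOn
    (mem_Iic.2 T.zero_le) (mem_Iic.2 le_rfl) T.zero_le
  have hprev : l (T - 1) < l T := by simpa [Nat.sub_add_cancel hT] using hincr (T - 1) (by omega)
  have hD : 0 < (1 - l T) * p + (1 - p) := by nlinarith
  have hcost : c (l T) < p * v / ((1 - l T) * p + (1 - p)) :=
    hfoc ▸ div_lt_div_of_pos_left (mul_pos hp0 hv) hD (by nlinarith)
  obtain ⟨b, hb, hgain⟩ := exists_intervalIntegral_lt_mul_of_lt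
    (hc_cont.mono (Ico_subset_Ico_left hlT0)) hlT hcost
  refine ⟨b, hb, mul_pos (mul_pos (pow_pos hδ.1 T) (by nlinarith)) ?_⟩
  rw [mul_assoc, mul_div_assoc]
  exact sub_pos.2 hgain

/-- No strategy that searches for `T` periods and then stops can be optimal:
given the last-period optimality condition, there is `l_{T+1} > l_T` such that
appending one more period of search strictly increases the total expected
discounted payoff (the added term, discounted and weighted by the survival
probability `1 − p l_T`, is strictly positive). -/
theorem never_stop (p v δ : ℝ) (hp : p ∈ Set.Ioo (0:ℝ) 1) (hv : 0 < v)
    (hδ : δ ∈ Set.Ioo (0:ℝ) 1)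
    (c : ℝ → ℝ)
    (hc_cont : ContinuousOn c (Set.Ico (0:ℝ) 1))
    (hc_mono : StrictMonoOn c (Set.Ico (0:ℝ) 1))
    (hc_lim : Filter.Tendsto c (nhdsWithin 1 (Set.Iio 1)) Filter.atTop)
    (hstart : p * v > c 0)
    (T : ℕ) (hT : 1 ≤ T) (l : ℕ → ℝ) (hl0 : l 0 = 0)
    (hincr : ∀ t < T, l t < l (t + 1)) (hlT : l T < 1)
    (hfoc : p * v / ((1 - l (T - 1)) * p + (1 - p)) = c (l T)) :
    ∃ lnext ∈ Set.Ioo (l T) 1,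
      0 < δ ^ T * (1 - p * l T) *
        ((lnext - l T) * p * v / ((1 - l T) * p + (1 - p)) -
          ∫ j in (l T)..lnext, c j) :=
  never_stop_general p v δ hp hv hδ c hc_cont T hT l hl0 hincr hlT hfoc
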